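/- Integrability of the infimum of the log-likelihood ratio over a rectangle (verification of the entropy condition E_{θ₀} Z(N_θ, X₁) > −∞): Fix θ₀ = (μ₀, ω₀²) with ω₀² > 0, and let ρ be a probability measure on ℝ × (0,∞) such that ∫ (u/(1 + ω₀²v))² dρ(u,v) < ∞ and ∫ |u|/(1 + ω₀²v) dρ(u,v) < ∞. Let N = [μ̲, μ̄] × [ω̲², ω̄²] be a bounded rectangle in ℝ × (0,∞) with ω̲² > 0. Then ∫ inf_{θ∈N} [ log f(u, v | θ₀) − log f(u, v | θ) ] dρ(u,v) > −∞, i.e., the negative part of the function (u,v) ↦ inf_{θ∈N}[log f(u,v|θ₀) − log f(u,v|θ)] is ρ-integrable. -/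

import Mathlib

open MeasureTheory

/-- The random-effects likelihood
`f(u, v | θ) = (1 + ω²v)^(−1/2) · exp(−(v/(2(1 + ω²v)))·(μ − u/v)²) · exp(u²/(2v))`
for `θ = (μ, ω²)`. -/
noncomputable def randomEffectsLik (u v μ ωsq : ℝ) : ℝ :=
  (1 + ωsq * v) ^ (-(1 : ℝ) / 2) *
    Real.exp (-(v / (2 * (1 + ωsq * v))) * (μ - u / v) ^ 2) *
    Real.exp (u ^ 2 / (2 * v))

/-!
For `v > 0` write `A = 1 + ω₀²v` and `B = 1 + ω²v`. The log-likelihood ratio is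
`½ log (B/A)` plus terms in `u/A`, `u/B` and `u²/(AB)`. On the rectangle `A ≤ C·B` for a constant
`C`, so the ratio is bounded below by `-(a + b |u|/A + c (u/A)²)`, which is `ρ`-integrable by
the moment conditions. The infimum over the rectangle is measurable because `θ ↦ log f(u, v | θ)`
is continuous, so the infimum may be taken over a countable dense subset.
-/

open Real Set

theorem aemeasurable_iInf_of_continuous {α X β : Type*} [MeasurableSpace α] {μ : Measure α}
    [TopologicalSpace X] [TopologicalSpace.SeparableSpace X]
    [ConditionallyCompleteLinearOrder β] [TopologicalSpace β] [OrderTopology β]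
    [SecondCountableTopology β] [MeasurableSpace β] [BorelSpace β]
    {F : α → X → β} (hmeas : ∀ x, Measurable (F · x)) (hcont : ∀ᵐ a ∂μ, Continuous (F a)) :
    AEMeasurable (fun a => ⨅ x, F a x) μ := by
  obtain ⟨S, hS, hSdense⟩ := TopologicalSpace.exists_countable_dense X
  have : Countable S := hS.to_subtype
  refine ⟨fun a => ⨅ x : S, F a x, Measurable.iInf fun x => hmeas x, ?_⟩
  filter_upwards [hcont] with a ha
  exact (hSdense.ciInf' ha).symm

theorem Integrable.min_zero_of_neg_le {α : Type*} [MeasurableSpace α] {μ : Measure α}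
    {f g : α → ℝ} (hg : Integrable g μ) (hf : AEStronglyMeasurable f μ)
    (hgf : ∀ᵐ a ∂μ, -g a ≤ f a) : Integrable (fun a => min (f a) 0) μ := by
  refine hg.norm.mono' (hf.inf aestronglyMeasurable_const) ?_
  filter_upwards [hgf] with a ha
  rw [norm_eq_abs, abs_le]
  constructor
  · exact le_min (le_trans (neg_le_neg (le_abs_self _)) ha) (by simp)
  · exact (min_le_right _ _).trans (norm_nonneg _)

theorem log_randomEffectsLik (u v μ s : ℝ) (hB : 0 < 1 + s * v) :
    log (randomEffectsLik u v μ s) =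
      -(1 / 2) * log (1 + s * v) - v / (2 * (1 + s * v)) * (μ - u / v) ^ 2 + u ^ 2 / (2 * v) := by
  rw [randomEffectsLik, log_mul (by positivity) (exp_ne_zero _),
    log_mul (by positivity) (exp_ne_zero _), log_rpow hB, log_exp, log_exp]
  ring

theorem measurable_log_randomEffectsLik (μ s : ℝ) :
    Measurable (fun p : ℝ × ℝ => log (randomEffectsLik p.1 p.2 μ s)) := by
  unfold randomEffectsLik
  fun_prop

theorem continuousOn_log_randomEffectsLik (u v : ℝ) :
    ContinuousOn (fun θ : ℝ × ℝ => log (randomEffectsLik u v θ.1 θ.2))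
      {θ | 0 < 1 + θ.2 * v} := by
  refine ContinuousOn.congr ?_ fun θ hθ => log_randomEffectsLik u v θ.1 θ.2 hθ
  refine ContinuousOn.add (ContinuousOn.sub ?_ ?_) continuousOn_const
  · exact continuousOn_const.mul (ContinuousOn.log (by fun_prop) fun θ hθ => hθ.ne')
  · exact (ContinuousOn.div continuousOn_const (by fun_prop) fun θ hθ => by
      simp only [mem_ofPred_eq] at hθ; positivity).mul (by fun_prop)

theorem log_randomEffectsLik_sub {u v : ℝ} (μ₀ ω₀ μ s : ℝ) (hv : v ≠ 0)
    (hA : 0 < 1 + ω₀ * v) (hB : 0 < 1 + s * v) :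
    log (randomEffectsLik u v μ₀ ω₀) - log (randomEffectsLik u v μ s) =
      (log (1 + s * v) - log (1 + ω₀ * v)) / 2
        + μ₀ * u / (1 + ω₀ * v) - v * μ₀ ^ 2 / (2 * (1 + ω₀ * v))
        - μ * u / (1 + s * v) + v * μ ^ 2 / (2 * (1 + s * v))
        + u ^ 2 * (ω₀ - s) / (2 * (1 + ω₀ * v) * (1 + s * v)) := by
  rw [log_randomEffectsLik u v μ₀ ω₀ hA, log_randomEffectsLik u v μ s hB]
  -- `field_simp` normalises `1 + s * v` to `1 + v * s`
  have hB' : 1 + v * s ≠ 0 := by rw [mul_comm]; exact hB.ne'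
  field_simp
  ring

theorem one_add_mul_le_max_mul_one_add_mul {ω₀ ωl s v : ℝ} (hω₀ : 0 ≤ ω₀) (hωl : 0 < ωl)
    (hs : ωl ≤ s) (hv : 0 ≤ v) :
    1 + ω₀ * v ≤ max 1 (ω₀ / ωl) * (1 + s * v) := by
  have hω₀s : ω₀ ≤ max 1 (ω₀ / ωl) * s :=
    calc ω₀ = ω₀ / ωl * ωl := (div_mul_cancel₀ _ hωl.ne').symm
      _ ≤ ω₀ / ωl * s := by gcongr
      _ ≤ max 1 (ω₀ / ωl) * s :=
        mul_le_mul_of_nonneg_right (le_max_right _ _) (hωl.le.trans hs)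
  calc 1 + ω₀ * v ≤ max 1 (ω₀ / ωl) + max 1 (ω₀ / ωl) * s * v := by
        gcongr
        exact le_max_left _ _
    _ = max 1 (ω₀ / ωl) * (1 + s * v) := by ring

theorem neg_le_log_randomEffectsLik_sub {u v μ₀ ω₀ μ s M ωl ωh : ℝ} (hv : 0 < v)
    (hω₀ : 0 < ω₀) (hωl : 0 < ωl) (hμ : |μ| ≤ M) (hs : s ∈ Icc ωl ωh) :
    -(log (max 1 (ω₀ / ωl)) / 2 + μ₀ ^ 2 / (2 * ω₀)
        + (|μ₀| + M * max 1 (ω₀ / ωl)) * (|u| / (1 + ω₀ * v))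
        + ωh * max 1 (ω₀ / ωl) / 2 * (u / (1 + ω₀ * v)) ^ 2)
      ≤ log (randomEffectsLik u v μ₀ ω₀) - log (randomEffectsLik u v μ s) := by
  have hs₀ : 0 < s := hωl.trans_le hs.1
  have hA : 0 < 1 + ω₀ * v := by positivity
  have hB : 0 < 1 + s * v := by positivity
  have hAB := one_add_mul_le_max_mul_one_add_mul hω₀.le hωl hs.1 hv.le
  rw [log_randomEffectsLik_sub μ₀ ω₀ μ s hv.ne' hA hB]
  have hμ₀ : v * μ₀ ^ 2 / (2 * (1 + ω₀ * v)) ≤ μ₀ ^ 2 / (2 * ω₀) := by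
    rw [div_le_div_iff₀ (by positivity) (by positivity)]
    nlinarith [sq_nonneg μ₀]
  have hC : 0 < max 1 (ω₀ / ωl) := one_pos.trans_le (le_max_left _ _)
  generalize max 1 (ω₀ / ωl) = C at *
  generalize 1 + ω₀ * v = A at *
  generalize 1 + s * v = B at *
  -- each term is bounded separately; `A ≤ C * B` trades every `1 / B` for `C / A`
  have hBA : 1 / B ≤ C / A := by rw [div_le_div_iff₀ hB hA]; linarith
  have hlog : -log C ≤ log B - log A := by
    have := log_le_log hA hAB
    rw [log_mul hC.ne' hB.ne'] at this
    linarith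
  have hμ₀u : -(|μ₀| * (|u| / A)) ≤ μ₀ * u / A :=
    calc -(|μ₀| * (|u| / A)) = -|μ₀ * u| / A := by rw [abs_mul]; ring
      _ ≤ μ₀ * u / A := by gcongr; exact neg_abs_le _
  have hμu : μ * u / B ≤ M * C * (|u| / A) := by
    have hM : 0 ≤ M := (abs_nonneg μ).trans hμ
    have hμu' : μ * u ≤ M * |u| := (le_abs_self _).trans (by rw [abs_mul]; gcongr)
    calc μ * u / B ≤ M * |u| * (1 / B) := by
          rw [mul_one_div]; exact div_le_div_of_nonneg_right hμu' hB.le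
      _ ≤ M * |u| * (C / A) := by gcongr
      _ = M * C * (|u| / A) := by ring
  have hμsq : 0 ≤ v * μ ^ 2 / (2 * B) := by positivity
  have hu : -(ωh * C / 2 * (u / A) ^ 2) ≤ u ^ 2 * (ω₀ - s) / (2 * A * B) := by
    have hωh : 0 ≤ ωh := hs₀.le.trans hs.2
    calc -(ωh * C / 2 * (u / A) ^ 2) = -(ωh * u ^ 2 / (2 * A)) * (C / A) := by ring
      _ ≤ -(ωh * u ^ 2 / (2 * A)) * (1 / B) :=
          mul_le_mul_of_nonpos_left hBA (neg_nonpos.2 (by positivity))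
      _ = -(ωh * u ^ 2) / (2 * A * B) := by ring
      _ ≤ u ^ 2 * (ω₀ - s) / (2 * A * B) := by
          gcongr
          nlinarith [sq_nonneg u, hs.2]
  linarith

/-- Integrability of the (negative part of the) infimum of the log-likelihood ratio
over a bounded rectangle `N = [μ̲, μ̄] × [ω̲², ω̄²] ⊆ ℝ × (0,∞)`, for any probability
measure `ρ` on `ℝ × (0,∞)` with the stated square- and first-moment conditions:
`∫ inf_{θ ∈ N} [log f(u,v|θ₀) − log f(u,v|θ)] dρ > −∞`, i.e. the negative part of
the infimum is `ρ`-integrable. -/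
theorem stmt5 (μ₀ ω₀sq : ℝ) (hω₀ : 0 < ω₀sq)
    (ρ : Measure (ℝ × ℝ)) [IsProbabilityMeasure ρ]
    (hsupp : ∀ᵐ p ∂ρ, 0 < p.2)
    (hmom2 : Integrable (fun p : ℝ × ℝ => (p.1 / (1 + ω₀sq * p.2)) ^ 2) ρ)
    (hmom1 : Integrable (fun p : ℝ × ℝ => |p.1| / (1 + ω₀sq * p.2)) ρ)
    (μlo μhi ωlo ωhi : ℝ) (hμ : μlo ≤ μhi) (hωlo : 0 < ωlo) (hω : ωlo ≤ ωhi) :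
    Integrable (fun p : ℝ × ℝ =>
      min (⨅ θ : (Set.Icc μlo μhi ×ˢ Set.Icc ωlo ωhi : Set (ℝ × ℝ)),
        (Real.log (randomEffectsLik p.1 p.2 μ₀ ω₀sq) -
          Real.log (randomEffectsLik p.1 p.2 (θ : ℝ × ℝ).1 (θ : ℝ × ℝ).2))) 0) ρ := by
  set N := Icc μlo μhi ×ˢ Icc ωlo ωhi
  have : Nonempty N := ⟨⟨(μlo, ωlo), left_mem_Icc.2 hμ, left_mem_Icc.2 hω⟩⟩
  set C := max 1 (ω₀sq / ωlo)
  set M := max |μlo| |μhi|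
  refine Integrable.min_zero_of_neg_le (g := fun p => log C / 2 + μ₀ ^ 2 / (2 * ω₀sq)
    + (|μ₀| + M * C) * (|p.1| / (1 + ω₀sq * p.2))
    + ωhi * C / 2 * (p.1 / (1 + ω₀sq * p.2)) ^ 2)
    (((integrable_const _).add (hmom1.const_mul _)).add (hmom2.const_mul _)) ?_ ?_
  · refine (aemeasurable_iInf_of_continuous (fun θ => ?_) ?_).aestronglyMeasurable
    · exact (measurable_log_randomEffectsLik _ _).sub (measurable_log_randomEffectsLik _ _)
    · filter_upwards [hsupp] with p hp
      refine continuous_const.sub ((continuousOn_log_randomEffectsLik p.1 p.2).comp_continuous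
        continuous_subtype_val fun θ => ?_)
      have := hωlo.trans_le θ.2.2.1
      simp only [mem_ofPred_eq]
      positivity
  · filter_upwards [hsupp] with p hp
    exact le_ciInf fun θ => neg_le_log_randomEffectsLik_sub hp hω₀ hωlo
      (abs_le_max_abs_abs θ.2.1.1 θ.2.1.2) θ.2.2
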